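/- A partial cube G (an isometric subgraph of a hypercube Q_m) has VC-dimension at most d if and only if G does not have the (d+1)-dimensional hypercube Q_{d+1} as a partial cube minor (i.e., Q_{d+1} cannot be obtained from G by a sequence of contractions of Θ-classes and restrictions to halfspaces). -/

import Mathlib

open Finset

/-- The hypercube graph on subsets of `Fin m`. -/
def cubeGraph (m : ℕ) : SimpleGraph (Finset (Fin m)) where
  Adj A B := (symmDiff A B).card = 1
  symm := ⟨fun A B (h : (symmDiff A B).card = 1) => by show (symmDiff B A).card = 1; rwa [symmDiff_comm]⟩
  loopless := ⟨fun A (h : (symmDiff A A).card = 1) => by simp only [symmDiff_self, bot_eq_empty, card_empty] at h; exact absurd h (by norm_num)⟩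

/-- `V` is (the vertex set of) a partial cube isometrically embedded in `Q_m`:
the distance in the induced subgraph equals the Hamming distance. -/
def IsPC {m : ℕ} (V : Set (Finset (Fin m))) : Prop :=
  ∀ u v : V, ((cubeGraph m).induce V).dist u v = (symmDiff u.1 v.1).card

def Shatters {m : ℕ} (V : Set (Finset (Fin m))) (Y : Finset (Fin m)) : Prop :=
  ∀ Z ⊆ Y, ∃ B ∈ V, B ∩ Y = Z

def VCdimLE {m : ℕ} (V : Set (Finset (Fin m))) (d : ℕ) : Prop :=
  ∀ Y : Finset (Fin m), Shatters V Y → Y.card ≤ d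

inductive PCStep {m : ℕ} : Set (Finset (Fin m)) → Set (Finset (Fin m)) → Prop
  | contract (i : Fin m) (V : Set (Finset (Fin m))) :
      PCStep V ((fun B => B.erase i) '' V)
  | restrictPos (i : Fin m) (V : Set (Finset (Fin m))) :
      PCStep V {B ∈ V | i ∈ B}
  | restrictNeg (i : Fin m) (V : Set (Finset (Fin m))) :
      PCStep V {B ∈ V | i ∉ B}

/-- Partial-cube minor relation: a sequence of contractions and restrictions. -/
def PCMinor {m : ℕ} : Set (Finset (Fin m)) → Set (Finset (Fin m)) → Prop :=
  Relation.ReflTransGen PCStep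

/-- `W` is (the vertex set of) a `k`-dimensional subcube of `Q_m`. -/
def IsCubeFam {m : ℕ} (k : ℕ) (W : Set (Finset (Fin m))) : Prop :=
  ∃ (Y X : Finset (Fin m)), Disjoint Y X ∧ X.card = k ∧
    W = {B | ∃ Z ⊆ X, B = Y ∪ Z}

/-- `G` has the cube `Q_k` as a pc-minor. -/
def HasQMinor {m : ℕ} (V : Set (Finset (Fin m))) (k : ℕ) : Prop :=
  ∃ W, PCMinor V W ∧ IsCubeFam k W

def hdist {m : ℕ} (A B : Finset (Fin m)) : ℕ := (symmDiff A B).card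

def IsConvexIn {m : ℕ} (V S : Set (Finset (Fin m))) : Prop :=
  S ⊆ V ∧ ∀ u ∈ S, ∀ v ∈ S, ∀ x ∈ V, hdist u x + hdist x v = hdist u v → x ∈ S

def convexHullIn {m : ℕ} (V S : Set (Finset (Fin m))) : Set (Finset (Fin m)) :=
  ⋂₀ {T | S ⊆ T ∧ IsConvexIn V T}

def IsGatedIn {m : ℕ} (V S : Set (Finset (Fin m))) : Prop :=
  S ⊆ V ∧ ∀ x ∈ V, ∃ g ∈ S, ∀ y ∈ S, hdist x g + hdist g y = hdist x y

/-- The standardly embedded full subdivision `SK_n` in `Q_n`: singletons and pairs. -/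
def SKset (n : ℕ) : Set (Finset (Fin n)) := {B | B.card = 1 ∨ B.card = 2}

/-- A standardly embedded copy of `SK_n` in `Q_m` along the injection `ι`. -/
def skCopy {m : ℕ} (n : ℕ) (ι : Fin n → Fin m) : Set (Finset (Fin m)) :=
  (fun B => B.image ι) '' SKset n

/-
A contraction or restriction can only destroy shattered sets: a set shattered after
contracting `i` avoids `i` and is already shattered before, and restrictions only lose
vertices. Conversely, a subcube shatters its free coordinates, and if `X` is shattered then
contracting every coordinate outside `X` leaves exactly the cube `2^X`.
-/

section

-- `open Finset` makes plain `Shatters` ambiguous with Mathlib's `Finset.Shatters`.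
variable {m : ℕ}

theorem Shatters.mono {V : Set (Finset (Fin m))} {X Y : Finset (Fin m)} (hY : _root_.Shatters V Y)
    (hXY : X ⊆ Y) : _root_.Shatters V X := by
  intro Z hZ
  obtain ⟨B, hB, hBY⟩ := hY Z (hZ.trans hXY)
  refine ⟨B, hB, ?_⟩
  rw [← inter_eq_right.2 hXY, ← inter_assoc, hBY, inter_eq_left.2 hZ]

theorem Shatters.of_pcStep {V W : Set (Finset (Fin m))} {Y : Finset (Fin m)} (h : PCStep V W)
    (hY : _root_.Shatters W Y) : _root_.Shatters V Y := by
  cases h with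
  | contract i =>
    have hi : i ∉ Y := by
      intro hiY
      obtain ⟨_, ⟨B, _, rfl⟩, hBY⟩ := hY Y subset_rfl
      exact notMem_erase i B (mem_of_mem_inter_left (hBY.symm ▸ hiY))
    intro Z hZ
    obtain ⟨_, ⟨B, hB, rfl⟩, hBY⟩ := hY Z hZ
    refine ⟨B, hB, ?_⟩
    rw [← hBY, erase_inter, erase_eq_of_notMem (fun h => hi (mem_of_mem_inter_right h))]
  | restrictPos i | restrictNeg i =>
    intro Z hZ
    obtain ⟨B, hB, hBY⟩ := hY Z hZ
    exact ⟨B, hB.1, hBY⟩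

theorem Shatters.of_pcMinor {V W : Set (Finset (Fin m))} {Y : Finset (Fin m)} (h : PCMinor V W)
    (hY : _root_.Shatters W Y) : _root_.Shatters V Y := by
  induction h with
  | refl => exact hY
  | tail _ step ih => exact ih (hY.of_pcStep step)

theorem IsCubeFam.exists_shatters {k : ℕ} {W : Set (Finset (Fin m))} (hW : IsCubeFam k W) :
    ∃ X : Finset (Fin m), X.card = k ∧ _root_.Shatters W X := by
  obtain ⟨Y, X, hYX, hX, rfl⟩ := hW
  refine ⟨X, hX, fun Z hZ => ⟨Y ∪ Z, ⟨Z, hZ, rfl⟩, ?_⟩⟩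
  rw [union_inter_distrib_right, inter_eq_left.2 hZ, disjoint_iff_inter_eq_empty.1 hYX,
    empty_union]

theorem pcMinor_image_sdiff (V : Set (Finset (Fin m))) (s : Finset (Fin m)) :
    PCMinor V ((· \ s) '' V) := by
  induction s using Finset.induction_on with
  | empty =>
    simp only [sdiff_empty, Set.image_id']
    exact .refl
  | insert a s _ ih =>
    have h := ih.tail (PCStep.contract a _)
    simp only [Set.image_image, ← sdiff_insert] at h
    exact h

theorem image_inter_eq_of_shatters {V : Set (Finset (Fin m))} {X : Finset (Fin m)}
    (hX : _root_.Shatters V X) : (· ∩ X) '' V = {B | ∃ Z ⊆ X, B = ∅ ∪ Z} := by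
  ext B
  simp only [Set.mem_image, Set.mem_ofPred_eq, empty_union]
  constructor
  · rintro ⟨B, -, rfl⟩
    exact ⟨B ∩ X, inter_subset_right, rfl⟩
  · rintro ⟨Z, hZ, rfl⟩
    exact hX _ hZ

theorem hasQMinor_card_of_shatters {V : Set (Finset (Fin m))} {X : Finset (Fin m)}
    (hX : _root_.Shatters V X) : HasQMinor V X.card := by
  have hminor : PCMinor V ((· ∩ X) '' V) := by
    have h := pcMinor_image_sdiff V Xᶜ
    simp only [sdiff_compl] at h
    exact h
  exact ⟨_, hminor, ∅, X, disjoint_empty_left X, rfl, image_inter_eq_of_shatters hX⟩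

end

theorem stmt0_general (m d : ℕ) (V : Set (Finset (Fin m))) :
    VCdimLE V d ↔ ¬ HasQMinor V (d + 1) := by
  constructor
  · rintro hV ⟨W, hminor, hW⟩
    obtain ⟨X, hX, hshatters⟩ := hW.exists_shatters
    have := hV X (hshatters.of_pcMinor hminor)
    omega
  · intro hV Y hY
    by_contra! hlt
    obtain ⟨X, hXY, hX⟩ := exists_subset_card_eq (show d + 1 ≤ Y.card by omega)
    exact hV (hX ▸ hasQMinor_card_of_shatters (hY.mono hXY))

/-- A partial cube has VC-dimension at most `d` iff it does not have `Q_{d+1}`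
as a pc-minor. -/
theorem stmt0 (m d : ℕ) (V : Set (Finset (Fin m))) (hV : IsPC V) :
    VCdimLE V d ↔ ¬ HasQMinor V (d + 1) :=
  stmt0_general m d V
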